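/- Let q ≥ 2, k ≥ 2 and d ≥ k be integers, let I be a maximization instance of k CSP-q with n ≥ d variables and opt(I) ≠ wor(I), and let x ∈ Σ_q^n. Then max_{y∈B^d(x)} v(I,y) ≥ δ(n,d,k)·opt(I) + (1 − δ(n,d,k))·wor(I). Moreover, if ⌊n(q−1)/q⌋ ≥ d, then max_{y∈B̃^d(x)} v(I,y) ≥ δ(⌊n(q−1)/q⌋, d, k)·opt(I) + (1 − δ(⌊n(q−1)/q⌋, d, k))·wor(I). -/

import Mathlib

/-- An instance of the (maximization) problem `k CSP-q` with `n` variables: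
`m` weighted constraints, where constraint `i` has positive weight `w i`,
arity `arity i ≤ k`, a strictly increasing tuple `idx i` of indices of the
variables it depends on, and a constraint function `P i : Σ_q^{arity i} → ℝ`. -/
structure CSPInstance (q k n : ℕ) where
  m : ℕ
  w : Fin m → ℝ
  w_pos : ∀ i, 0 < w i
  arity : Fin m → ℕ
  arity_le : ∀ i, arity i ≤ k
  idx : (i : Fin m) → Fin (arity i) → Fin n
  idx_mono : ∀ i, StrictMono (idx i)
  P : (i : Fin m) → ((Fin (arity i) → Fin q) → ℝ)

namespace CSPInstance

variable {q k n : ℕ}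

/-- The objective value `v(I, x)` of a solution `x ∈ Σ_q^n`. -/
def value (I : CSPInstance q k n) (x : Fin n → Fin q) : ℝ :=
  ∑ i : Fin I.m, I.w i * I.P i (fun s => x (I.idx i s))

/-- `opt(I)`, the best (maximum) objective value. -/
noncomputable def opt (I : CSPInstance q k n) : ℝ := sSup (Set.range I.value)

/-- `wor(I)`, the worst (minimum) objective value. -/
noncomputable def wor (I : CSPInstance q k n) : ℝ := sInf (Set.range I.value)

/-- `E[v(I,X)]`, the average objective value over all `q^n` solutions. -/
noncomputable def avg (I : CSPInstance q k n) : ℝ :=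
  (∑ x : Fin n → Fin q, I.value x) / (q : ℝ) ^ n

/-- A strong coloring of `I` with `ν` colors: an assignment of colors to variables such
that the support of each constraint meets each color class in at most one index. -/
def StrongColoring (I : CSPInstance q k n) (ν : ℕ) : Prop :=
  ∃ c : Fin n → Fin ν, ∀ i : Fin I.m, Function.Injective (fun s => c (I.idx i s))

end CSPInstance

/-- `(Ψ, Φ)` is an `(n,d)`-cover pair of arrays (CPA) of strength `k`: both arrays have
`R` rows, `n` columns and Boolean entries; `Φ` contains at least one all-ones row; every
row of `Ψ` has at most `d` ones; and for every `k` pairwise distinct columns and every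
`v ∈ {0,1}^k`, `Ψ` and `Φ` have the same number of rows whose restriction to these columns
equals `v`. -/
def IsCPA (n d k R : ℕ) (Ψ Φ : Fin R → Fin n → Bool) : Prop :=
  (∃ r, ∀ j, Φ r j = true) ∧
  (∀ r, (Finset.univ.filter fun j => Ψ r j = true).card ≤ d) ∧
  (∀ c : Fin k → Fin n, StrictMono c → ∀ v : Fin k → Bool,
    (Finset.univ.filter fun r => ∀ s, Ψ r (c s) = v s).card =
      (Finset.univ.filter fun r => ∀ s, Φ r (c s) = v s).card)

/-- `Δ(R, R*, n, d, k)` is nonempty: there is an `(n,d)`-CPA of strength `k` with `R` rows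
in which the all-ones row occurs exactly `R*` times in `Φ`. -/
def DeltaNonempty (R Rstar n d k : ℕ) : Prop :=
  ∃ Ψ Φ : Fin R → Fin n → Bool, IsCPA n d k R Ψ Φ ∧
    (Finset.univ.filter fun r => ∀ j, Φ r j = true).card = Rstar

/-- `δ(n,d,k)`: the supremum of `R*/R` over all integers `R ≥ R* > 0` such that
`Δ(R, R*, n, d, k)` is nonempty. -/
noncomputable def deltaCPA (n d k : ℕ) : ℝ :=
  sSup {x : ℝ | ∃ R Rstar : ℕ, 0 < Rstar ∧ Rstar ≤ R ∧ DeltaNonempty R Rstar n d k ∧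
    x = (Rstar : ℝ) / R}

/-!
Fix an optimal solution `x*` and a CPA `(Ψ, Φ)` whose columns index the coordinates where `x`
and `x*` differ. Each row `b` yields the solution that follows `x*` where `b` has a one and `x`
elsewhere. A constraint reads at most `k` coordinates, so strength `k` makes the total value over
the rows of `Ψ` equal to that over the rows of `Φ`; the latter is at least
`R*·opt + (R - R*)·wor`, because the all-ones rows of `Φ` give `x*`. Hence some row of `Ψ`,
which has at most `d` ones, gives a solution in `B^d(x)` of value at least
`(R*/R)·opt + (1 - R*/R)·wor`.
For `B̃^d(x)`, averaging over `a` finds a shift `x + a·𝟏` that differs from `x*` in at most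
`⌊n(q-1)/q⌋` coordinates, and a CPA on that many columns is used instead.
-/

open Finset Function

theorem Fintype.sum_comp_eq_of_card_fiber_eq {ι κ M : Type*} [Fintype ι] [Fintype κ]
    [DecidableEq κ] [AddCommMonoid M] {f f' : ι → κ}
    (h : ∀ v, #{i | f i = v} = #{i | f' i = v}) (G : κ → M) :
    ∑ i, G (f i) = ∑ i, G (f' i) := by
  simp only [← Finset.sum_fiberwise' univ f G, ← Finset.sum_fiberwise' univ f' G, sum_const, h]

theorem Finset.exists_strictMono_fin_subset_range {N k : ℕ} {S : Finset (Fin N)}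
    (hS : #S ≤ k) (hkN : k ≤ N) :
    ∃ c : Fin k → Fin N, StrictMono c ∧ ↑S ⊆ Set.range c := by
  obtain ⟨S', hSS', hcard⟩ := exists_superset_card_eq hS (by simpa using hkN)
  refine ⟨fun s => S'.orderEmbOfFin hcard s, (S'.orderEmbOfFin hcard).strictMono, ?_⟩
  intro j hj
  simpa [range_orderEmbOfFin] using hSS' hj

theorem IsCPA.sum_eq_of_dependsOn {N d k R : ℕ} {Ψ Φ : Fin R → Fin N → Bool}
    (hcpa : IsCPA N d k R Ψ Φ) (hkN : k ≤ N) {g : (Fin N → Bool) → ℝ} {S : Finset (Fin N)}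
    (hS : #S ≤ k) (hg : DependsOn g S) :
    ∑ r, g (Ψ r) = ∑ r, g (Φ r) := by
  obtain ⟨c, hc, hSc⟩ := exists_strictMono_fin_subset_range hS hkN
  have hg_comp : ∀ b, g b = g (extend c (b ∘ c) fun _ => false) := by
    refine fun b => hg fun j hj => ?_
    obtain ⟨s, rfl⟩ := hSc hj
    exact (hc.injective.extend_apply (b ∘ c) _ s).symm
  rw [sum_congr rfl fun r _ => hg_comp (Ψ r), sum_congr rfl fun r _ => hg_comp (Φ r)]
  refine Fintype.sum_comp_eq_of_card_fiber_eq (f := fun r => Ψ r ∘ c) (f' := fun r => Φ r ∘ c)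
    (fun v => ?_) (fun u => g (extend c u fun _ => false))
  simpa only [funext_iff, comp_apply] using hcpa.2.2 c hc v

theorem Real.sSup_mul_add_one_sub_mul_le {S : Set ℝ} {a b M : ℝ} (hab : a ≤ b) (haM : a ≤ M)
    (h : ∀ ρ ∈ S, ρ * b + (1 - ρ) * a ≤ M) : sSup S * b + (1 - sSup S) * a ≤ M := by
  have key : (b - a) * sSup S ≤ M - a := by
    rw [← smul_eq_mul, ← Real.sSup_smul_of_nonneg (sub_nonneg.2 hab)]
    refine Real.sSup_le ?_ (sub_nonneg.2 haM)
    rintro _ ⟨ρ, hρ, rfl⟩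
    linarith [h ρ hρ, smul_eq_mul (b - a) ρ]
  linarith

theorem Finset.exists_card_add_ne_le {ι G : Type*} [Fintype ι] [AddGroup G] [Fintype G]
    [DecidableEq G] (x x' : ι → G) :
    ∃ a : G,
      #{j | x j + a ≠ x' j} ≤ Fintype.card ι * (Fintype.card G - 1) / Fintype.card G := by
  have hcol : ∀ j, #{a | x j + a ≠ x' j} = Fintype.card G - 1 := fun j => by
    have : ({a | x j + a ≠ x' j} : Finset G) = univ.erase (-x j + x' j) := by
      ext a; simp [eq_neg_add_iff_add_eq]
    rw [this, card_erase_of_mem (mem_univ _), card_univ]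
  have hsum : ∑ a, Fintype.card G * #{j | x j + a ≠ x' j}
      = ∑ _a : G, Fintype.card ι * (Fintype.card G - 1) := by
    rw [← mul_sum]
    simp only [card_filter]
    rw [sum_comm]
    simp only [← card_filter, hcol, sum_const, card_univ, smul_eq_mul]
  obtain ⟨a, -, ha⟩ := exists_le_of_sum_le univ_nonempty hsum.le
  exact ⟨a, (Nat.le_div_iff_mul_le Fintype.card_pos).2 ((mul_comm _ _).le.trans ha)⟩

theorem Finset.exists_injOn_fin {α : Type*} {D : Finset α} {N : ℕ} (hD : #D ≤ N)
    (hN : 0 < N) :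
    ∃ σ : α → Fin N, Set.InjOn σ D := by
  classical
  obtain ⟨e⟩ := Embedding.nonempty_of_card_le (α := D) (β := Fin N) (by simpa using hD)
  refine ⟨fun j => if h : j ∈ D then e ⟨j, h⟩ else ⟨0, hN⟩, fun j hj j' hj' he => ?_⟩
  simp only [Finset.mem_coe] at hj hj'
  simpa [dif_pos hj, dif_pos hj'] using he

def blend {ι κ α : Type*} (z x' : ι → α) (σ : ι → κ) (b : κ → Bool) : ι → α :=
  fun j => if b (σ j) then x' j else z j

theorem hammingDist_blend_le {ι κ α : Type*} [Fintype ι] [Fintype κ] [DecidableEq α]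
    {z x' : ι → α} {σ : ι → κ} (hσ : Set.InjOn σ {j | z j ≠ x' j}) (b : κ → Bool) :
    hammingDist z (blend z x' σ b) ≤ #{i | b i} := by
  refine card_le_card_of_injOn σ (fun j hj => ?_) (hσ.mono fun j hj => ?_) <;>
    by_cases hb : b (σ j) <;> simp_all [blend]

namespace CSPInstance

variable {q k n : ℕ} (I : CSPInstance q k n)

theorem wor_le_value (y : Fin n → Fin q) : I.wor ≤ I.value y :=
  csInf_le (Set.finite_range _).bddBelow ⟨y, rfl⟩

theorem value_le_opt (y : Fin n → Fin q) : I.value y ≤ I.opt :=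
  le_csSup (Set.finite_range _).bddAbove ⟨y, rfl⟩

theorem exists_value_eq_opt [Nonempty (Fin n → Fin q)] : ∃ y, I.value y = I.opt :=
  (Set.range_nonempty _).csSup_mem (Set.finite_range _)

theorem sum_value_blend_eq {N d R : ℕ} {Ψ Φ : Fin R → Fin N → Bool}
    (hcpa : IsCPA N d k R Ψ Φ) (hkN : k ≤ N) (z x' : Fin n → Fin q) (σ : Fin n → Fin N) :
    ∑ r, I.value (blend z x' σ (Ψ r)) = ∑ r, I.value (blend z x' σ (Φ r)) := by
  unfold value
  rw [sum_comm, sum_comm (γ := Fin R)]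
  refine sum_congr rfl fun i _ => hcpa.sum_eq_of_dependsOn hkN
    (g := fun b => I.w i * I.P i fun s => blend z x' σ b (I.idx i s))
    (S := univ.image (σ ∘ I.idx i))
    (card_image_le.trans (by simpa using I.arity_le i)) fun b b' hbb' => ?_
  have : ∀ s, b (σ (I.idx i s)) = b' (σ (I.idx i s)) := fun s => hbb' _ (by simp)
  simp only [blend, this]

theorem exists_hammingDist_le_of_deltaNonempty {N d R Rstar : ℕ}
    (hΔ : DeltaNonempty R Rstar N d k) (hkN : k ≤ N) {z x' : Fin n → Fin q}
    {σ : Fin n → Fin N} (hσ : Set.InjOn σ {j | z j ≠ x' j}) :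
    ∃ y, hammingDist z y ≤ d ∧
      (Rstar : ℝ) / R * I.value x' + (1 - (Rstar : ℝ) / R) * I.wor ≤ I.value y := by
  obtain ⟨Ψ, Φ, hcpa, rfl⟩ := hΔ
  obtain ⟨r₀, -⟩ := hcpa.1
  have hR : (R : ℝ) ≠ 0 := by exact_mod_cast (Fin.pos r₀).ne'
  have hΦ : ∑ r, (I.wor + if ∀ j, Φ r j = true then I.value x' - I.wor else 0)
      ≤ ∑ r, I.value (blend z x' σ (Φ r)) := by
    refine sum_le_sum fun r _ => ?_
    split_ifs with h
    · have : blend z x' σ (Φ r) = x' := funext fun j => by simp [blend, h]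
      simp [this]
    · simpa using I.wor_le_value _
  have hsum : ∑ r, (I.wor + if ∀ j, Φ r j = true then I.value x' - I.wor else 0)
      = ∑ _r : Fin R, ((#{r | ∀ j, Φ r j = true} : ℝ) / R * I.value x'
          + (1 - (#{r | ∀ j, Φ r j = true} : ℝ) / R) * I.wor) := by
    rw [sum_add_distrib, sum_ite, sum_const_zero, sum_const, sum_const, sum_const, card_univ,
      Fintype.card_fin]
    simp only [nsmul_eq_mul]
    field_simp
    ring
  obtain ⟨r, -, hr⟩ := exists_le_of_sum_le ⟨r₀, mem_univ _⟩
    (hsum ▸ hΦ.trans (I.sum_value_blend_eq hcpa hkN z x' σ).ge)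
  exact ⟨_, (hammingDist_blend_le hσ _).trans (hcpa.2.1 r), hr⟩

theorem exists_mem_deltaCPA_le_value {T : Set (Fin n → Fin q)} (hT : T.Nonempty) {N d : ℕ}
    (h : ∀ R Rstar, DeltaNonempty R Rstar N d k →
      ∃ y ∈ T, (Rstar : ℝ) / R * I.opt + (1 - (Rstar : ℝ) / R) * I.wor ≤ I.value y) :
    ∃ y ∈ T, deltaCPA N d k * I.opt + (1 - deltaCPA N d k) * I.wor ≤ I.value y := by
  obtain ⟨y₀, hy₀, hmax⟩ := T.exists_max_image I.value T.toFinite hT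
  refine ⟨y₀, hy₀, Real.sSup_mul_add_one_sub_mul_le ((I.wor_le_value y₀).trans
    (I.value_le_opt y₀)) (I.wor_le_value y₀) ?_⟩
  rintro _ ⟨R, Rstar, -, -, hΔ, rfl⟩
  obtain ⟨y, hy, hle⟩ := h R Rstar hΔ
  exact hle.trans (hmax y hy)

end CSPInstance

theorem hamming_ball_diff_apx_general
    (q k d n : ℕ) (hq : 2 ≤ q) (hk : 2 ≤ k) (hdk : k ≤ d) (hnd : d ≤ n)
    (I : CSPInstance q k n) (x : Fin n → Fin q) :
    (∃ y : Fin n → Fin q, hammingDist x y ≤ d ∧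
      deltaCPA n d k * I.opt + (1 - deltaCPA n d k) * I.wor ≤ I.value y) ∧
    (d ≤ n * (q - 1) / q →
      ∃ y : Fin n → Fin q, (∃ a : Fin q, hammingDist (fun j => x j + a) y ≤ d) ∧
        deltaCPA (n * (q - 1) / q) d k * I.opt +
            (1 - deltaCPA (n * (q - 1) / q) d k) * I.wor ≤ I.value y) := by
  have : NeZero q := ⟨by omega⟩
  have : Nonempty (Fin n → Fin q) := ⟨x⟩
  obtain ⟨xstar, hxstar⟩ := I.exists_value_eq_opt
  have near {N : ℕ} (z : Fin n → Fin q) (σ : Fin n → Fin N) (hkN : k ≤ N)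
      (hσ : Set.InjOn σ {j | z j ≠ xstar j}) (R Rstar : ℕ)
      (hΔ : DeltaNonempty R Rstar N d k) :
      ∃ y, hammingDist z y ≤ d ∧
        (Rstar : ℝ) / R * I.opt + (1 - (Rstar : ℝ) / R) * I.wor ≤ I.value y :=
    hxstar ▸ I.exists_hammingDist_le_of_deltaNonempty hΔ hkN hσ
  refine ⟨I.exists_mem_deltaCPA_le_value (T := {y | hammingDist x y ≤ d}) ⟨x, by simp⟩
    (near x id (hdk.trans hnd) (Set.injOn_id _)), fun hd => ?_⟩
  obtain ⟨a, ha⟩ := exists_card_add_ne_le x xstar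
  rw [Fintype.card_fin, Fintype.card_fin] at ha
  obtain ⟨σ, hσ⟩ := exists_injOn_fin ha (by omega)
  refine I.exists_mem_deltaCPA_le_value
    (T := {y | ∃ a, hammingDist (fun j => x j + a) y ≤ d}) ⟨fun j => x j + a, a, by simp⟩
    fun R Rstar hΔ => ?_
  obtain ⟨y, hy, hle⟩ := near _ σ (hdk.trans hd) (by simpa using hσ) R Rstar hΔ
  exact ⟨y, ⟨a, hy⟩, hle⟩

/-- Let `q ≥ 2`, `k ≥ 2`, `d ≥ k`, let `I` be a maximization instance
of `k CSP-q` with `n ≥ d` variables and `opt(I) ≠ wor(I)`, and let `x ∈ Σ_q^n`. Then some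
`y` in the Hamming ball `B^d(x)` satisfies
`v(I,y) ≥ δ(n,d,k)·opt(I) + (1 − δ(n,d,k))·wor(I)`; moreover, if `⌊n(q−1)/q⌋ ≥ d`, some
`y` in `B̃^d(x) = ∪_{a∈Σ_q} B^d(x + a·𝟏)` satisfies
`v(I,y) ≥ δ(⌊n(q−1)/q⌋,d,k)·opt(I) + (1 − δ(⌊n(q−1)/q⌋,d,k))·wor(I)`. -/
theorem hamming_ball_diff_apx
    (q k d n : ℕ) (hq : 2 ≤ q) (hk : 2 ≤ k) (hdk : k ≤ d) (hnd : d ≤ n)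
    (I : CSPInstance q k n) (hne : I.opt ≠ I.wor) (x : Fin n → Fin q) :
    (∃ y : Fin n → Fin q, hammingDist x y ≤ d ∧
      deltaCPA n d k * I.opt + (1 - deltaCPA n d k) * I.wor ≤ I.value y) ∧
    (d ≤ n * (q - 1) / q →
      ∃ y : Fin n → Fin q, (∃ a : Fin q, hammingDist (fun j => x j + a) y ≤ d) ∧
        deltaCPA (n * (q - 1) / q) d k * I.opt +
            (1 - deltaCPA (n * (q - 1) / q) d k) * I.wor ≤ I.value y) :=
  hamming_ball_diff_apx_general q k d n hq hk hdk hnd I x
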